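/- Suppose d ∈ [0,1), ω ∈ ℝ, g ≠ 0 and κ, γ > 0, and let (A, S, D) be a solution of the Maxwell–Bloch equations on [0,∞). Then for all t ≥ 0, |A(t)|² + (g²/(γκ))|S(t)|² + (g²/(4γκ))(D(t) − d)² ≤ exp( −t · min{ κ − g²d/γ, γ − g²d/κ } ) · ( |A(0)|² + (g²/(γκ))|S(0)|² + (g²/(4γκ))(D(0) − d)² ). -/

import Mathlib

/-!
With `c = g²/(γκ)`, along a solution the energy `V = |A|² + c|S|² + (c/4)(D - d)²` has
`V' = -2κ|A|² - 2γc|S|² - γc(D - d)² + 2g(1 + cd) Re(conj A · S)`: the weight `c/4` is chosen so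
that the `D`-dependence of the coupling terms cancels. For a rate `m ≤ κ - g²d/γ`, `m ≤ γ - g²d/κ`
and `d ≥ 0`, the quantity `-mV - V'` is a nonnegative combination of `|A|²`, `|S|²`, `(D - d)²` and
`|κA - gS|²`, so `V' ≤ -mV` and Grönwall's inequality gives exponential decay.
-/

open Real ComplexConjugate

theorem le_mul_exp_of_hasDerivAt_le_mul {f f' : ℝ → ℝ} {K a : ℝ}
    (hf : ∀ t ≥ a, HasDerivAt f (f' t) t) (bound : ∀ t ≥ a, f' t ≤ K * f t) :
    ∀ t ≥ a, f t ≤ f a * exp (K * (t - a)) := by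
  intro t ht
  have hcont : ContinuousOn f (Set.Icc a t) := fun s hs =>
    (hf s hs.1).continuousAt.continuousWithinAt
  have := le_gronwallBound_of_liminf_deriv_right_le (ε := 0) hcont
    (fun s hs _ hr => (hf s hs.1).hasDerivWithinAt.liminf_right_slope_le hr) le_rfl
    (fun s hs => by simpa using bound s hs.1) t ⟨ht, le_rfl⟩
  rwa [gronwallBound_ε0] at this

theorem two_mul_mul_re_conj_mul_le (κ g : ℝ) (a s : ℂ) :
    2 * g * κ * (conj a * s).re ≤ κ ^ 2 * ‖a‖ ^ 2 + g ^ 2 * ‖s‖ ^ 2 := by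
  have h := sq_nonneg ‖(κ : ℂ) * a - g * s‖
  simp only [Complex.sq_norm, Complex.normSq_apply, Complex.mul_re, Complex.mul_im, Complex.sub_re,
    Complex.sub_im, Complex.ofReal_re, Complex.ofReal_im, Complex.conj_re, Complex.conj_im] at h ⊢
  nlinarith [h]

namespace MaxwellBloch

variable (g κ γ d : ℝ)

noncomputable def energy (a s : ℂ) (D : ℝ) : ℝ :=
  ‖a‖ ^ 2 + g ^ 2 / (γ * κ) * ‖s‖ ^ 2 + g ^ 2 / (4 * γ * κ) * (D - d) ^ 2

noncomputable def energyDeriv (a s : ℂ) (D : ℝ) : ℝ :=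
  -2 * κ * ‖a‖ ^ 2 - 2 * g ^ 2 / κ * ‖s‖ ^ 2 - g ^ 2 / κ * (D - d) ^ 2
    + 2 * g * (1 + g ^ 2 * d / (γ * κ)) * (conj a * s).re

theorem _root_.HasDerivAt.complex_norm_sq {f : ℝ → ℂ} {f' : ℂ} {t : ℝ} (hf : HasDerivAt f f' t) :
    HasDerivAt (‖f ·‖ ^ 2) (2 * (conj (f t) * f').re) t := by
  simpa [Complex.inner, mul_comm] using hf.norm_sq

theorem hasDerivAt_energy {ω : ℝ} (hκ : κ ≠ 0) (hγ : γ ≠ 0) {A S : ℝ → ℂ} {D : ℝ → ℝ} {t : ℝ}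
    (hA : HasDerivAt A (-((κ : ℂ) + (ω : ℂ) * Complex.I) * A t + (g : ℂ) * S t) t)
    (hS : HasDerivAt S (-((γ : ℂ) + (ω : ℂ) * Complex.I) * S t + (g : ℂ) * A t * (D t : ℂ)) t)
    (hD : HasDerivAt D (-4 * g * (conj (A t) * S t).re - 2 * γ * (D t - d)) t) :
    HasDerivAt (fun t => energy g κ γ d (A t) (S t) (D t))
      (energyDeriv g κ γ d (A t) (S t) (D t)) t := by
  have h := (hA.complex_norm_sq.add (hS.complex_norm_sq.const_mul (g ^ 2 / (γ * κ)))).add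
    (((hD.sub_const d).pow 2).const_mul (g ^ 2 / (4 * γ * κ)))
  refine h.congr_deriv ?_
  simp only [energyDeriv, Complex.mul_re, Complex.mul_im, Complex.add_re, Complex.add_im,
    Complex.neg_re, Complex.neg_im, Complex.ofReal_re, Complex.ofReal_im, Complex.I_re,
    Complex.I_im, Complex.conj_re, Complex.conj_im, Complex.sq_norm, Complex.normSq_apply]
  field_simp
  ring

theorem energyDeriv_le {m : ℝ} (hκ : 0 < κ) (hγ : 0 < γ) (hd : 0 ≤ d)
    (hmκ : m ≤ κ - g ^ 2 * d / γ) (hmγ : m ≤ γ - g ^ 2 * d / κ) (a s : ℂ) (D : ℝ) :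
    energyDeriv g κ γ d a s D ≤ -m * energy g κ γ d a s D := by
  have hcross := two_mul_mul_re_conj_mul_le κ g a s
  have key : -m * energy g κ γ d a s D - energyDeriv g κ γ d a s D =
      (κ - m - g ^ 2 * d / γ) * ‖a‖ ^ 2 + g ^ 2 / (γ * κ) * (γ - m - g ^ 2 * d / κ) * ‖s‖ ^ 2
      + g ^ 2 / (4 * γ * κ) * (4 * γ - m) * (D - d) ^ 2
      + (1 + g ^ 2 * d / (γ * κ)) / κ *
        (κ ^ 2 * ‖a‖ ^ 2 + g ^ 2 * ‖s‖ ^ 2 - 2 * g * κ * (conj a * s).re) := by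
    unfold energy energyDeriv
    field_simp
    ring
  have hm4γ : m ≤ 4 * γ := by
    have : 0 ≤ g ^ 2 * d / κ := by positivity
    linarith
  have h1 : 0 ≤ (κ - m - g ^ 2 * d / γ) * ‖a‖ ^ 2 := mul_nonneg (by linarith) (sq_nonneg _)
  have h2 : 0 ≤ g ^ 2 / (γ * κ) * (γ - m - g ^ 2 * d / κ) * ‖s‖ ^ 2 :=
    mul_nonneg (mul_nonneg (by positivity) (by linarith)) (sq_nonneg _)
  have h3 : 0 ≤ g ^ 2 / (4 * γ * κ) * (4 * γ - m) * (D - d) ^ 2 :=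
    mul_nonneg (mul_nonneg (by positivity) (by linarith)) (sq_nonneg _)
  have h4 : 0 ≤ (1 + g ^ 2 * d / (γ * κ)) / κ *
      (κ ^ 2 * ‖a‖ ^ 2 + g ^ 2 * ‖s‖ ^ 2 - 2 * g * κ * (conj a * s).re) :=
    mul_nonneg (by positivity) (by linarith)
  linarith

end MaxwellBloch

theorem maxwell_bloch_lyapunov_estimate_nonneg_d_general
    (ω g κ γ d : ℝ) (hκ : 0 < κ) (hγ : 0 < γ)
    (hd0 : 0 ≤ d)
    (A S : ℝ → ℂ) (D : ℝ → ℝ)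
    (hA : ∀ t ≥ (0 : ℝ),
      HasDerivAt A (-((κ : ℂ) + (ω : ℂ) * Complex.I) * A t + (g : ℂ) * S t) t)
    (hS : ∀ t ≥ (0 : ℝ),
      HasDerivAt S (-((γ : ℂ) + (ω : ℂ) * Complex.I) * S t + (g : ℂ) * A t * (D t : ℂ)) t)
    (hD : ∀ t ≥ (0 : ℝ),
      HasDerivAt D (-4 * g * ((starRingEnd ℂ) (A t) * S t).re - 2 * γ * (D t - d)) t) :
    ∀ t ≥ (0 : ℝ),
      ‖A t‖ ^ 2 + g ^ 2 / (γ * κ) * ‖S t‖ ^ 2 +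
          g ^ 2 / (4 * γ * κ) * (D t - d) ^ 2 ≤
        Real.exp (-t * min (κ - g ^ 2 * d / γ) (γ - g ^ 2 * d / κ)) *
          (‖A 0‖ ^ 2 + g ^ 2 / (γ * κ) * ‖S 0‖ ^ 2 +
            g ^ 2 / (4 * γ * κ) * (D 0 - d) ^ 2) := by
  intro t ht
  set m := min (κ - g ^ 2 * d / γ) (γ - g ^ 2 * d / κ)
  have hdecay := le_mul_exp_of_hasDerivAt_le_mul
    (fun s hs => MaxwellBloch.hasDerivAt_energy g κ γ d hκ.ne' hγ.ne' (hA s hs) (hS s hs) (hD s hs))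
    (fun s _ => MaxwellBloch.energyDeriv_le g κ γ d hκ hγ hd0 (min_le_left _ _)
      (min_le_right _ _) _ _ _) t ht
  calc MaxwellBloch.energy g κ γ d (A t) (S t) (D t)
      ≤ MaxwellBloch.energy g κ γ d (A 0) (S 0) (D 0) * exp (-m * (t - 0)) := hdecay
    _ = exp (-t * m) * MaxwellBloch.energy g κ γ d (A 0) (S 0) (D 0) := by
      ring_nf

/-- **Lyapunov estimate for the Maxwell–Bloch equations with `0 ≤ d < 1`.**
For any solution `(A, S, D)` on `[0,∞)`,
`|A(t)|² + (g²/(γκ))|S(t)|² + (g²/(4γκ))(D(t) − d)²` decays at exponential rate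
`min{κ − g²d/γ, γ − g²d/κ}`. -/
theorem maxwell_bloch_lyapunov_estimate_nonneg_d
    (ω g κ γ d : ℝ) (hg : g ≠ 0) (hκ : 0 < κ) (hγ : 0 < γ)
    (hd0 : 0 ≤ d) (hd1 : d < 1)
    (A S : ℝ → ℂ) (D : ℝ → ℝ)
    (hA : ∀ t ≥ (0 : ℝ),
      HasDerivAt A (-((κ : ℂ) + (ω : ℂ) * Complex.I) * A t + (g : ℂ) * S t) t)
    (hS : ∀ t ≥ (0 : ℝ),
      HasDerivAt S (-((γ : ℂ) + (ω : ℂ) * Complex.I) * S t + (g : ℂ) * A t * (D t : ℂ)) t)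
    (hD : ∀ t ≥ (0 : ℝ),
      HasDerivAt D (-4 * g * ((starRingEnd ℂ) (A t) * S t).re - 2 * γ * (D t - d)) t) :
    ∀ t ≥ (0 : ℝ),
      ‖A t‖ ^ 2 + g ^ 2 / (γ * κ) * ‖S t‖ ^ 2 +
          g ^ 2 / (4 * γ * κ) * (D t - d) ^ 2 ≤
        Real.exp (-t * min (κ - g ^ 2 * d / γ) (γ - g ^ 2 * d / κ)) *
          (‖A 0‖ ^ 2 + g ^ 2 / (γ * κ) * ‖S 0‖ ^ 2 +
            g ^ 2 / (4 * γ * κ) * (D 0 - d) ^ 2) :=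
  maxwell_bloch_lyapunov_estimate_nonneg_d_general ω g κ γ d hκ hγ hd0 A S D hA hS hD
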